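/- arXiv:1905.11616 — 5 statements merged into one kernel-verified Lean document; each statement's English description precedes it below -/
import Mathlib

section
/- Let U, V ∈ ℝ^{n×d} and k ≥ 1 an integer, and let T_U^{(k)}, T_V^{(k)} ∈ ℝ^{n×m} be degree-k TensorSketches of U and V built from the same random hash functions h_1,…,h_k and sign functions s_1,…,s_k. Then E[ ‖(UVᵀ)^{⊙k} − T_U^{(k)} T_V^{(k)ᵀ}‖_F² ] ≤ (2 + 3^k) · (Σ_{i=1}^n (Σ_{j=1}^d U_{ij}²)^k) · (Σ_{i=1}^n (Σ_{j=1}^d V_{ij}²)^k) / m, where A^{⊙k} denotes the matrix of entrywise k-th powers [A_{ij}^k] and ‖·‖_F is the Frobenius norm. -/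
/-!
Fix two rows `u, v`. Expanding both sketches, `⟨T u, T v⟩` is the sum, over the pairs `(i, i')`
of index tuples that hash to the same bucket, of `∏ₜ sₜ(iₜ) sₜ(i'ₜ) u(iₜ) v(i'ₜ)`. Diagonal pairs
`i = i'` always collide and carry sign `+1`, so they reproduce `⟨u, v⟩ᵏ` exactly: the error is the
sum over the colliding off-diagonal pairs. In its square, the expectation over the signs factorises
over `t` into four-point moments of independent signs, each at most the number of ways to split the
four indices into two equal pairs, and an off-diagonal pair collides with probability exactly `1/m`,
since `h ↦ ∑ₜ (hₜ(iₜ) - hₜ(i'ₜ))` is a surjective homomorphism onto `Fin m`. The resulting bound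
factorises over `t` once more, and each of the three pairings contributes at most `‖u‖² ‖v‖²` by
Cauchy–Schwarz, so each entry of the error matrix has expected square at most
`3ᵏ ‖u‖²ᵏ ‖v‖²ᵏ / m`.
-/

open Matrix
open scoped BigOperators

noncomputable section

/-- The real value of a Boolean sign. -/
def sgn (b : Bool) : ℝ := if b then 1 else -1

/-- Degree-`k` TensorSketch of `u ∈ ℝ^d` built from hash functions
`h 0, …, h (k-1) : [d] → {0,…,m-1}` and sign functions `s 0, …, s (k-1)`. -/
def tSketch {d m : ℕ} [NeZero m] (k : ℕ) (h : Fin k → Fin d → Fin m)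
    (s : Fin k → Fin d → Bool) (u : Fin d → ℝ) : Fin m → ℝ :=
  fun j => ∑ i : Fin k → Fin d,
    if (∑ t, h t (i t)) = j then ∏ t, (sgn (s t (i t)) * u (i t)) else 0

/-- Row-wise TensorSketch of a matrix `U ∈ ℝ^{n×d}`. -/
def tSketchM {n d m : ℕ} [NeZero m] (k : ℕ) (h : Fin k → Fin d → Fin m)
    (s : Fin k → Fin d → Bool) (U : Matrix (Fin n) (Fin d) ℝ) :
    Matrix (Fin n) (Fin m) ℝ :=
  Matrix.of fun i => tSketch k h s (U i)

/-- Squared Frobenius norm. -/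
def frobSq {α β : Type*} [Fintype α] [Fintype β] (A : Matrix α β ℝ) : ℝ :=
  ∑ i, ∑ j, (A i j)^2

/-- Expectation over the hash functions `h t` and the sign functions `s t`,
drawn independently and uniformly at random. -/
def expHS {k d m : ℕ}
    (F : (Fin k → Fin d → Fin m) → (Fin k → Fin d → Bool) → ℝ) : ℝ :=
  (∑ h : Fin k → Fin d → Fin m, ∑ s : Fin k → Fin d → Bool, F h s) /
    ((Fintype.card (Fin k → Fin d → Fin m)) * (Fintype.card (Fin k → Fin d → Bool)))

open Finset

namespace TensorSketch

theorem expHS_eq_expect {k d m : ℕ}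
    (F : (Fin k → Fin d → Fin m) → (Fin k → Fin d → Bool) → ℝ) :
    expHS F = 𝔼 h, 𝔼 s, F h s := by
  simp only [expHS, Fintype.expect_eq_sum_div_card, ← sum_div, div_div, mul_comm]

theorem expect_pi_prod {ι κ R : Type*} [Fintype ι] [DecidableEq ι] [Fintype κ] [Semifield R]
    [CharZero R] (f : ι → κ → R) :
    𝔼 g : ι → κ, ∏ i, f i (g i) = ∏ i, 𝔼 x, f i x := by
  simp only [Fintype.expect_eq_sum_div_card, ← Fintype.prod_sum, prod_div_distrib,
    Fintype.card_pi, Nat.cast_prod]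

section Pairings

variable {α : Type*} [DecidableEq α]

def pairingCount (a b c e : α) : ℝ :=
  (if a = b ∧ c = e then 1 else 0) + (if a = c ∧ b = e then 1 else 0) +
    (if a = e ∧ b = c then 1 else 0)

theorem pairingCount_nonneg (a b c e : α) : 0 ≤ pairingCount a b c e := by
  unfold pairingCount; split_ifs <;> norm_num

def pairingWeight (u v : α → ℝ) (x y : α × α) : ℝ :=
  pairingCount x.1 x.2 y.1 y.2 * (|u x.1| * |v x.2| * (|u y.1| * |v y.2|))

theorem pairingWeight_nonneg (u v : α → ℝ) (x y : α × α) : 0 ≤ pairingWeight u v x y :=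
  mul_nonneg (pairingCount_nonneg _ _ _ _) (by positivity)

theorem sum_pairingWeight_le [Fintype α] (u v : α → ℝ) :
    ∑ x, ∑ y, pairingWeight u v x y ≤ 3 * ((∑ a, u a ^ 2) * ∑ a, v a ^ 2) := by
  have hcs : (∑ a, |u a| * |v a|) ^ 2 ≤ (∑ a, u a ^ 2) * ∑ a, v a ^ 2 := by
    simpa only [sq_abs] using sum_mul_sq_le_sq_mul_sq univ (fun a => |u a|) (fun a => |v a|)
  have hsum : ∑ x, ∑ y, pairingWeight u v x y =
      2 * (∑ a, |u a| * |v a|) ^ 2 + (∑ a, u a ^ 2) * ∑ a, v a ^ 2 := by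
    simp [pairingWeight, pairingCount, add_mul, sum_add_distrib, Fintype.sum_prod_type,
      ite_and, sum_ite_irrel]
    rw [sq, sum_mul_sum, sum_mul_sum, two_mul]
    simp only [← sum_add_distrib]
    refine sum_congr rfl fun a _ => sum_congr rfl fun b _ => ?_
    rw [← sq_abs (u a), ← sq_abs (v b)]
    ring
  linarith

end Pairings

section Signs

theorem sgn_mul_self (b : Bool) : sgn b * sgn b = 1 := by cases b <;> simp [sgn]

theorem sgn_not (b : Bool) : sgn (!b) = -sgn b := by cases b <;> simp [sgn]

variable {α : Type*} [Fintype α] [DecidableEq α]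

theorem expect_eq_zero_of_flip (x : α) (F : (α → Bool) → ℝ)
    (hF : ∀ w, F (Function.update w x (!w x)) = -F w) : 𝔼 w, F w = 0 := by
  have hflip : Function.Involutive fun w : α → Bool => Function.update w x (!w x) := by
    intro w; simp
  have hneg : 𝔼 w, F w = -𝔼 w, F w := by
    rw [← expect_neg_distrib]
    exact Fintype.expect_equiv hflip.toPerm _ _ fun w => by simp [hF]
  linarith

theorem expect_sgn_mul_sgn (a b : α) :
    𝔼 w : α → Bool, sgn (w a) * sgn (w b) = if a = b then 1 else 0 := by
  split_ifs with hab
  · simp [hab, sgn_mul_self]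
  · refine expect_eq_zero_of_flip a _ fun w => ?_
    simp [Function.update_of_ne (Ne.symm hab), sgn_not]

theorem abs_expect_sgn_four_le (a b c e : α) :
    |𝔼 w : α → Bool, sgn (w a) * sgn (w b) * sgn (w c) * sgn (w e)| ≤ pairingCount a b c e := by
  have hle : ∀ (p : Prop) [Decidable p], (p → a = b ∧ c = e ∨ a = c ∧ b = e ∨ a = e ∧ b = c) →
      |(if p then 1 else 0 : ℝ)| ≤ pairingCount a b c e := by
    intro p _ hp
    unfold pairingCount
    split_ifs <;> norm_num
    tauto
  -- If `a` is one of `b, c, e`, two signs cancel and a two-point moment is left;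
  -- otherwise flipping the sign at `a` shows that the moment vanishes.
  by_cases hab : a = b
  · have hw : ∀ w : α → Bool, sgn (w a) * sgn (w b) * sgn (w c) * sgn (w e) =
        sgn (w c) * sgn (w e) := fun w => by rw [hab, sgn_mul_self, one_mul]
    simpa only [hw, expect_sgn_mul_sgn] using hle _ fun hce => Or.inl ⟨hab, hce⟩
  by_cases hac : a = c
  · have hw : ∀ w : α → Bool, sgn (w a) * sgn (w b) * sgn (w c) * sgn (w e) =
        sgn (w b) * sgn (w e) := fun w => by
      rw [hac]; linear_combination sgn (w b) * sgn (w e) * sgn_mul_self (w c)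
    simpa only [hw, expect_sgn_mul_sgn] using hle _ fun hbe => Or.inr (Or.inl ⟨hac, hbe⟩)
  by_cases hae : a = e
  · have hw : ∀ w : α → Bool, sgn (w a) * sgn (w b) * sgn (w c) * sgn (w e) =
        sgn (w b) * sgn (w c) := fun w => by
      rw [hae]; linear_combination sgn (w b) * sgn (w c) * sgn_mul_self (w e)
    simpa only [hw, expect_sgn_mul_sgn] using hle _ fun hbc => Or.inr (Or.inr ⟨hae, hbc⟩)
  have hzero : 𝔼 w : α → Bool, sgn (w a) * sgn (w b) * sgn (w c) * sgn (w e) = 0 :=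
    expect_eq_zero_of_flip a _ fun w => by
      simp [Function.update_of_ne (Ne.symm hab), Function.update_of_ne (Ne.symm hac),
        Function.update_of_ne (Ne.symm hae), sgn_not]
  rw [hzero, abs_zero]
  exact pairingCount_nonneg a b c e

end Signs

section PairTuples

/- A pair `(i, i')` of index tuples `ι → α` is encoded as one tuple `π : ι → α × α`
of index pairs; it contributes `∏ₜ sₜ(iₜ) sₜ(i'ₜ) u(iₜ) v(i'ₜ)` to `⟨T u, T v⟩` when the
two tuples land in the same bucket. -/

variable {ι α : Type*} [Fintype ι]

def signProd (s : ι → α → Bool) (π : ι → α × α) : ℝ :=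
  ∏ t, sgn (s t (π t).1) * sgn (s t (π t).2)

def weight (u v : α → ℝ) (π : ι → α × α) : ℝ := ∏ t, u (π t).1 * v (π t).2

def IsDiag (π : ι → α × α) : Prop := ∀ t, (π t).1 = (π t).2

instance [DecidableEq α] (π : ι → α × α) : Decidable (IsDiag π) :=
  inferInstanceAs (Decidable (∀ t, (π t).1 = (π t).2))

def Collides {G : Type*} [AddCommMonoid G] (h : ι → α → G) (π : ι → α × α) : Prop :=
  ∑ t, h t (π t).1 = ∑ t, h t (π t).2

instance {G : Type*} [AddCommMonoid G] [DecidableEq G] (h : ι → α → G) (π : ι → α × α) :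
    Decidable (Collides h π) :=
  inferInstanceAs (Decidable (_ = _))

def errorTerm {G : Type*} [AddCommMonoid G] [DecidableEq α] [DecidableEq G] (h : ι → α → G)
    (s : ι → α → Bool) (u v : α → ℝ) (π : ι → α × α) : ℝ :=
  if ¬IsDiag π ∧ Collides h π then signProd s π * weight u v π else 0

theorem signProd_of_isDiag (s : ι → α → Bool) {π : ι → α × α} (hπ : IsDiag π) :
    signProd s π = 1 :=
  prod_eq_one fun t _ => by rw [hπ t, sgn_mul_self]

theorem collides_of_isDiag {G : Type*} [AddCommMonoid G] (h : ι → α → G) {π : ι → α × α}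
    (hπ : IsDiag π) : Collides h π :=
  sum_congr rfl fun t _ => by rw [hπ t]

variable [DecidableEq ι]

theorem sum_sum_eq_sum_pairTuple [Fintype α] (g : (ι → α × α) → ℝ) :
    ∑ i : ι → α, ∑ i' : ι → α, g (fun t => (i t, i' t)) = ∑ π, g π := by
  rw [← Fintype.sum_prod_type', ← (Equiv.arrowProdEquivProdArrow ι _ _).symm.sum_comp]
  rfl

theorem inner_pow_eq_sum_isDiag [Fintype α] [DecidableEq α] (u v : α → ℝ) :
    (∑ a, u a * v a) ^ Fintype.card ι =
      ∑ π : ι → α × α, if IsDiag π then weight u v π else 0 := by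
  have hpair : ∑ a, u a * v a = ∑ x : α × α, if x.1 = x.2 then u x.1 * v x.2 else 0 := by
    simp [Fintype.sum_prod_type]
  rw [hpair, ← card_univ, ← prod_const, Fintype.prod_sum]
  simp only [weight, IsDiag, prod_ite_zero, mem_univ, true_imp_iff]
  rfl

theorem sum_sum_prod_eq_pow {κ : Type*} [Fintype κ] (G : κ → κ → ℝ) :
    ∑ π : ι → κ, ∑ ρ : ι → κ, ∏ t, G (π t) (ρ t) = (∑ x, ∑ y, G x y) ^ Fintype.card ι := by
  simp only [← Fintype.prod_sum]
  rw [← Fintype.prod_sum fun _ x => ∑ y, G x y, prod_const, card_univ]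

theorem abs_expect_signProd_mul_le [Fintype α] [DecidableEq α] (π ρ : ι → α × α) :
    |𝔼 s : ι → α → Bool, signProd s π * signProd s ρ| ≤
      ∏ t, pairingCount (π t).1 (π t).2 (ρ t).1 (ρ t).2 := by
  let f : ι → (α → Bool) → ℝ := fun t w =>
    sgn (w (π t).1) * sgn (w (π t).2) * sgn (w (ρ t).1) * sgn (w (ρ t).2)
  have hsplit : ∀ s : ι → α → Bool, signProd s π * signProd s ρ = ∏ t, f t (s t) := by
    intro s
    simp only [f, signProd, ← prod_mul_distrib, mul_assoc]
  simp only [hsplit, expect_pi_prod, abs_prod]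
  exact prod_le_prod (fun _ _ => abs_nonneg _) fun t _ => abs_expect_sgn_four_le _ _ _ _

end PairTuples

section Hashing

variable {ι α G : Type*} [Fintype ι] [DecidableEq ι] [DecidableEq α] [AddCommGroup G]

def bucketDiff (π : ι → α × α) : (ι → α → G) →+ G :=
  AddMonoidHom.mk' (fun h => ∑ t, (h t (π t).1 - h t (π t).2)) fun h g => by
    simp only [Pi.add_apply, ← sum_add_distrib]; congr 1; ext t; abel

theorem bucketDiff_surjective {π : ι → α × α} (hπ : ¬IsDiag π) :
    Function.Surjective (bucketDiff (G := G) π) := by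
  obtain ⟨t₀, ht₀⟩ := not_forall.1 hπ
  intro g
  have hsingle : ∀ f : α × α → α,
      ∑ t, (Pi.single t₀ (Pi.single (π t₀).1 g) : ι → α → G) t (f (π t)) =
        (Pi.single (π t₀).1 g : α → G) (f (π t₀)) :=
    fun f => by rw [Fintype.sum_eq_single t₀ fun t ht => by simp [ht]]; simp
  refine ⟨Pi.single t₀ (Pi.single (π t₀).1 g), ?_⟩
  simp [bucketDiff, sum_sub_distrib, hsingle, Ne.symm ht₀]

variable [Fintype α] [Fintype G] [DecidableEq G]

theorem expect_collides {π : ι → α × α} (hπ : ¬IsDiag π) :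
    𝔼 h : ι → α → G, (if Collides h π then (1 : ℝ) else 0) = 1 / Fintype.card G := by
  have hfiber := fun c => AddMonoidHom.card_fiber_eq_of_mem_range (bucketDiff (G := G) π)
    (bucketDiff_surjective hπ c) (bucketDiff_surjective hπ 0)
  have hcard : Fintype.card (ι → α → G) =
      Fintype.card G * #{h | bucketDiff (G := G) π h = 0} := by
    rw [← card_univ, card_eq_sum_card_fiberwise (f := bucketDiff π) (t := univ) (by simp)]
    simp [hfiber]
  have hzero : #{h | bucketDiff (G := G) π h = 0} ≠ 0 := card_ne_zero.2 ⟨0, by simp⟩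
  have hcoll : ∀ h : ι → α → G, Collides h π ↔ bucketDiff π h = 0 := by
    simp [Collides, bucketDiff, sum_sub_distrib, sub_eq_zero]
  simp only [hcoll, Fintype.expect_eq_sum_div_card, sum_boole, hcard]
  field_simp
  push_cast
  ring

theorem expect_errorTerm_mul_le (u v : α → ℝ) (π ρ : ι → α × α) :
    𝔼 h : ι → α → G, 𝔼 s : ι → α → Bool, errorTerm h s u v π * errorTerm h s u v ρ ≤
      (∏ t, pairingWeight u v (π t) (ρ t)) / Fintype.card G := by
  have hG : 0 ≤ (∏ t, pairingWeight u v (π t) (ρ t)) / Fintype.card G :=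
    div_nonneg (prod_nonneg fun t _ => pairingWeight_nonneg _ _ _ _) (Nat.cast_nonneg _)
  by_cases hπ : IsDiag π
  · simpa [errorTerm, hπ] using hG
  let c : (ι → α → G) → ℝ := fun h => if Collides h π ∧ ¬IsDiag ρ ∧ Collides h ρ then 1 else 0
  have hfac : ∀ h s, errorTerm h s u v π * errorTerm h s u v ρ =
      c h * (signProd s π * signProd s ρ) * (weight u v π * weight u v ρ) := by
    intro h s
    simp only [errorTerm, c, hπ, not_false_eq_true, true_and, ite_zero_mul_ite_zero, boole_mul]
    split_ifs <;> ring
  have hc : 𝔼 h, c h ≤ 1 / Fintype.card G := by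
    rw [← expect_collides hπ]
    exact expect_le_expect fun h _ => by simp only [c]; split_ifs <;> simp_all
  have hc0 : 0 ≤ 𝔼 h, c h := expect_nonneg fun h _ => by simp only [c]; split_ifs <;> norm_num
  calc 𝔼 h, 𝔼 s, errorTerm h s u v π * errorTerm h s u v ρ
      = (𝔼 h, c h) * (𝔼 s : ι → α → Bool, signProd s π * signProd s ρ) *
          (weight u v π * weight u v ρ) := by
        simp only [hfac, ← expect_mul, ← mul_expect]
    _ ≤ (1 / Fintype.card G) * (∏ t, pairingCount (π t).1 (π t).2 (ρ t).1 (ρ t).2) *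
          |weight u v π * weight u v ρ| := by
        refine (le_abs_self _).trans ?_
        rw [abs_mul, abs_mul, abs_of_nonneg hc0]
        gcongr
        exact abs_expect_signProd_mul_le π ρ
    _ = (∏ t, pairingWeight u v (π t) (ρ t)) / Fintype.card G := by
        simp only [pairingWeight, weight, prod_mul_distrib, abs_mul, abs_prod]
        ring

end Hashing

section Sketch

variable {k d m : ℕ} [NeZero m]

theorem sum_tSketch_mul_tSketch (h : Fin k → Fin d → Fin m) (s : Fin k → Fin d → Bool)
    (u v : Fin d → ℝ) :
    ∑ j, tSketch k h s u j * tSketch k h s v j =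
      ∑ π : Fin k → Fin d × Fin d, if Collides h π then signProd s π * weight u v π else 0 := by
  have hpairs : ∀ i i' : Fin k → Fin d, ∑ j, (if (∑ t, h t (i t)) = j then
        ∏ t, (sgn (s t (i t)) * u (i t)) else 0) * (if (∑ t, h t (i' t)) = j then
        ∏ t, (sgn (s t (i' t)) * v (i' t)) else 0) =
      if Collides h (fun t => (i t, i' t)) then
        signProd s (fun t => (i t, i' t)) * weight u v (fun t => (i t, i' t)) else 0 := by
    intro i i'
    have hprod : (∏ t, (sgn (s t (i t)) * u (i t))) * ∏ t, (sgn (s t (i' t)) * v (i' t)) =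
        signProd s (fun t => (i t, i' t)) * weight u v (fun t => (i t, i' t)) := by
      simp only [signProd, weight, ← prod_mul_distrib]
      exact prod_congr rfl fun t _ => by ring
    rw [← hprod]
    simp only [ite_zero_mul_ite_zero]
    split_ifs with hc
    · have hc' : ∑ t, h t (i t) = ∑ t, h t (i' t) := hc
      simp [hc']
    · exact sum_eq_zero fun j _ => if_neg fun hj => hc (hj.1.trans hj.2.symm)
  simp only [tSketch, sum_mul_sum]
  calc _ = ∑ i : Fin k → Fin d, ∑ i' : Fin k → Fin d, ∑ j : Fin m,
        _ := by rw [sum_comm]; exact sum_congr rfl fun i _ => sum_comm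
    _ = _ := by simp only [hpairs]
    _ = _ := sum_sum_eq_sum_pairTuple _

theorem sum_tSketch_mul_tSketch_sub_pow (h : Fin k → Fin d → Fin m)
    (s : Fin k → Fin d → Bool) (u v : Fin d → ℝ) :
    ∑ j, tSketch k h s u j * tSketch k h s v j - (∑ a, u a * v a) ^ k =
      ∑ π, errorTerm h s u v π := by
  have hdiag := inner_pow_eq_sum_isDiag (ι := Fin k) u v
  rw [Fintype.card_fin] at hdiag
  rw [sum_tSketch_mul_tSketch, hdiag, ← sum_sub_distrib]
  refine sum_congr rfl fun π _ => ?_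
  by_cases hπ : IsDiag π
  · simp [errorTerm, hπ, collides_of_isDiag h hπ, signProd_of_isDiag s hπ]
  · simp [errorTerm, hπ]

theorem expect_sq_sketch_error_le (u v : Fin d → ℝ) :
    𝔼 h : Fin k → Fin d → Fin m, 𝔼 s : Fin k → Fin d → Bool,
        (∑ j, tSketch k h s u j * tSketch k h s v j - (∑ a, u a * v a) ^ k) ^ 2 ≤
      (3 * ((∑ a, u a ^ 2) * ∑ a, v a ^ 2)) ^ k / m := by
  calc _ = ∑ π : Fin k → Fin d × Fin d, ∑ ρ : Fin k → Fin d × Fin d,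
        𝔼 h : Fin k → Fin d → Fin m, 𝔼 s : Fin k → Fin d → Bool,
          errorTerm h s u v π * errorTerm h s u v ρ := by
        simp only [sum_tSketch_mul_tSketch_sub_pow, sq, sum_mul_sum, expect_sum_comm]
    _ ≤ ∑ π : Fin k → Fin d × Fin d, ∑ ρ : Fin k → Fin d × Fin d,
        (∏ t, pairingWeight u v (π t) (ρ t)) / m := by
        gcongr with π _ ρ _
        simpa using expect_errorTerm_mul_le (G := Fin m) u v π ρ
    _ = (∑ x, ∑ y, pairingWeight u v x y) ^ k / m := by
        simp only [← sum_div, sum_sum_prod_eq_pow, Fintype.card_fin]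
    _ ≤ _ := by
        gcongr
        · exact sum_nonneg fun x _ => sum_nonneg fun y _ => pairingWeight_nonneg u v x y
        · exact sum_pairingWeight_le u v

end Sketch

end TensorSketch

theorem tensorSketch_variance_bound_general {n d m : ℕ} [NeZero m] (k : ℕ)
    (U V : Matrix (Fin n) (Fin d) ℝ) :
    expHS (fun (h : Fin k → Fin d → Fin m) (s : Fin k → Fin d → Bool) =>
      frobSq ((Matrix.of fun i j => ((U * Vᵀ) i j) ^ k)
        - tSketchM k h s U * (tSketchM k h s V)ᵀ))
    ≤ (2 + 3 ^ k) * (∑ i, (∑ j, (U i j) ^ 2) ^ k) * (∑ i, (∑ j, (V i j) ^ 2) ^ k) / m := by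
  have hrows : ∀ (h : Fin k → Fin d → Fin m) (s : Fin k → Fin d → Bool),
      frobSq ((Matrix.of fun i j => ((U * Vᵀ) i j) ^ k)
        - tSketchM k h s U * (tSketchM k h s V)ᵀ) =
      ∑ r, ∑ r', (∑ j, tSketch k h s (U r) j * tSketch k h s (V r') j -
        (∑ a, U r a * V r' a) ^ k) ^ 2 := by
    intro h s
    simp [frobSq, tSketchM, Matrix.mul_apply, sub_sq_comm]
  calc _ = ∑ r, ∑ r', 𝔼 h : Fin k → Fin d → Fin m, 𝔼 s : Fin k → Fin d → Bool,
        (∑ j, tSketch k h s (U r) j * tSketch k h s (V r') j -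
          (∑ a, U r a * V r' a) ^ k) ^ 2 := by
        simp only [TensorSketch.expHS_eq_expect, hrows, expect_sum_comm]
    _ ≤ ∑ r, ∑ r', (3 * ((∑ a, U r a ^ 2) * ∑ a, V r' a ^ 2)) ^ k / m := by
        gcongr with r _ r' _
        exact TensorSketch.expect_sq_sketch_error_le (U r) (V r')
    _ = 3 ^ k * (∑ i, (∑ j, (U i j) ^ 2) ^ k) * (∑ i, (∑ j, (V i j) ^ 2) ^ k) / m := by
        simp only [mul_pow, ← sum_div, ← mul_sum, ← sum_mul]
        ring
    _ ≤ _ := by gcongr; linarith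

/-- **Variance bound for TensorSketch** (Avron et al.):
`E ‖(UVᵀ)^{⊙k} − T_U^{(k)} T_V^{(k)ᵀ}‖_F² ≤ (2+3^k)(Σ_i(Σ_j U_{ij}²)^k)(Σ_i(Σ_j V_{ij}²)^k)/m`. -/
theorem tensorSketch_variance_bound {n d m : ℕ} [NeZero m] (k : ℕ) (hk : 1 ≤ k)
    (U V : Matrix (Fin n) (Fin d) ℝ) :
    expHS (fun (h : Fin k → Fin d → Fin m) (s : Fin k → Fin d → Bool) =>
      frobSq ((Matrix.of fun i j => ((U * Vᵀ) i j) ^ k)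
        - tSketchM k h s U * (tSketchM k h s V)ᵀ))
    ≤ (2 + 3 ^ k) * (∑ i, (∑ j, (U i j) ^ 2) ^ k) * (∑ i, (∑ j, (V i j) ^ 2) ^ k) / m :=
  tensorSketch_variance_bound_general k U V
end
end

section
/- Let U, V ∈ ℝ^{n×d}, f : ℝ → ℝ, and let X, f⃗, W be as in Definition (Vandermonde/regularizer). Then for every coefficient vector c = (c_0,…,c_r) ∈ ℝ^{r+1}, the Poly-TensorSketch output Γ with coefficients c satisfies E[ ‖f⊙(UVᵀ) − Γ‖_F² ] ≤ 2 ‖X c − f⃗‖_2² + 2 ‖W c‖_2². -/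
open Matrix
open scoped BigOperators

noncomputable section

/-- Output of Poly-TensorSketch: `Γ = Σ_{j=0}^r c_j T_U^{(j)} T_V^{(j)ᵀ}`,
where `T_U^{(j)}` is built from `h 0, …, h (j-1)` and `s 0, …, s (j-1)`. -/
def ptsGamma {n d m : ℕ} [NeZero m] (r : ℕ) (c : Fin (r + 1) → ℝ)
    (h : Fin r → Fin d → Fin m) (s : Fin r → Fin d → Bool)
    (U V : Matrix (Fin n) (Fin d) ℝ) : Matrix (Fin n) (Fin n) ℝ :=
  ∑ j : Fin (r + 1),
    c j • (tSketchM (j : ℕ)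
        (fun t => h ⟨t.1, lt_of_lt_of_le t.2 (Nat.lt_succ_iff.mp j.2)⟩)
        (fun t => s ⟨t.1, lt_of_lt_of_le t.2 (Nat.lt_succ_iff.mp j.2)⟩) U
      * (tSketchM (j : ℕ)
        (fun t => h ⟨t.1, lt_of_lt_of_le t.2 (Nat.lt_succ_iff.mp j.2)⟩)
        (fun t => s ⟨t.1, lt_of_lt_of_le t.2 (Nat.lt_succ_iff.mp j.2)⟩) V)ᵀ)

/-- Squared Euclidean norm of a real vector. -/
def vnormSq {ι : Type*} [Fintype ι] (x : ι → ℝ) : ℝ := ∑ i, (x i) ^ 2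

/-- The Vandermonde matrix `X ∈ ℝ^{n²×(r+1)}` whose `ℓ`-th column is the
vectorization of the entrywise power matrix `[((UVᵀ)_{ij})^ℓ]`. -/
def vand {n d : ℕ} (r : ℕ) (U V : Matrix (Fin n) (Fin d) ℝ) :
    Matrix (Fin n × Fin n) (Fin (r + 1)) ℝ :=
  Matrix.of fun p ℓ => ((U * Vᵀ) p.1 p.2) ^ (ℓ : ℕ)

/-- The vectorization `f⃗ ∈ ℝ^{n²}` of `f⊙(UVᵀ)`. -/
def fvec {n d : ℕ} (f : ℝ → ℝ) (U V : Matrix (Fin n) (Fin d) ℝ) :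
    Fin n × Fin n → ℝ :=
  fun p => f ((U * Vᵀ) p.1 p.2)

/-- Diagonal entries of the regularizer `W`: `W_{00} = 0` and
`W_{jj} = sqrt( r(2+3^j)(Σ_i(Σ_k U_{ik}²)^j)(Σ_i(Σ_k V_{ik}²)^j)/m )` for `j ≥ 1`. -/
def wReg {n d : ℕ} (r m : ℕ) (U V : Matrix (Fin n) (Fin d) ℝ) :
    Fin (r + 1) → ℝ :=
  fun ℓ => if (ℓ : ℕ) = 0 then 0 else
    Real.sqrt ((r : ℝ) * (2 + 3 ^ (ℓ : ℕ))
      * (∑ i, (∑ l, (U i l) ^ 2) ^ (ℓ : ℕ))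
      * (∑ i, (∑ l, (V i l) ^ 2) ^ (ℓ : ℕ)) / m)

open Finset

/-!
Write `x = ⟨U_i, V_j⟩`. Since the degree-0 sketch is exact,
`f(x) - Γ_ij = (f(x) - Σ_ℓ c_ℓ x^ℓ) - Σ_{ℓ ≥ 1} c_ℓ (⟨T^{(ℓ)}_{U_i}, T^{(ℓ)}_{V_j}⟩ - x^ℓ)`,
so `(a + b)² ≤ 2a² + 2b²` and Cauchy–Schwarz over the `r` nonzero degrees reduce the claim to
the variance bound `E (⟨T_u^{(k)}, T_v^{(k)}⟩ - ⟨u, v⟩^k)² ≤ (3 ‖u‖² ‖v‖²)^k / m`, and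
`r Σ_{i,j} (3 ‖U_i‖² ‖V_j‖²)^k / m ≤ W_kk²`.

For the variance bound, `⟨T_u, T_v⟩ - ⟨u, v⟩^k` is the sum over index tuples `α ≠ β` with
colliding hashes of `S(α) S(β) u^α v^β`. In the second moment the hashes of `α ≠ β` collide with
probability `1/m`, and the signs factor over the `k` coordinates into fourth moments
`E[σ_a σ_b σ_c σ_e]`, which vanish unless the four indices match up in pairs. What remains is the
`k`-th power of a four-index sum bounded by `3 ‖u‖² ‖v‖²`.
-/

lemma expHS_eq_expect {k d m : ℕ}
    (F : (Fin k → Fin d → Fin m) → (Fin k → Fin d → Bool) → ℝ) :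
    expHS F = 𝔼 h, 𝔼 s, F h s := by
  simp only [expHS, Fintype.expect_eq_sum_div_card, ← sum_div, div_div, mul_comm]

lemma expect_pi_prod {ι B K : Type*} [Fintype ι] [DecidableEq ι] [Fintype B]
    [Semifield K] [CharZero K] (f : ι → B → K) :
    𝔼 x : ι → B, ∏ i, f i (x i) = ∏ i, 𝔼 b, f i b := by
  simp only [Fintype.expect_eq_sum_div_card, prod_div_distrib, ← Fintype.prod_sum,
    Fintype.card_pi, prod_const, card_univ, Nat.cast_pow]

lemma expect_comp_castLE {A K : Type*} [Fintype A] [Nonempty A] [Semifield K] [CharZero K]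
    {k r : ℕ} (hk : k ≤ r) (g : (Fin k → A) → K) :
    𝔼 x : Fin r → A, g (fun t => x (Fin.castLE hk t)) = 𝔼 y, g y := by
  obtain ⟨l, rfl⟩ := Nat.exists_eq_add_of_le hk
  rw [← Fintype.expect_equiv (Fin.appendEquiv k l) (fun p => g p.1), ← univ_product_univ,
    expect_product' (f := fun y (_ : Fin l → A) => g y)]
  · exact expect_congr rfl fun y _ => expect_const univ_nonempty (g y)
  · exact fun p => congrArg g (funext fun t => (Fin.append_left p.1 p.2 t).symm)

lemma sum_sum_prod_eq_pow {ι D R : Type*} [Fintype ι] [DecidableEq ι] [Fintype D]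
    [CommSemiring R] (w : D → D → D → D → R) :
    ∑ p : (ι → D) × (ι → D), ∑ q : (ι → D) × (ι → D),
        ∏ t, w (p.1 t) (p.2 t) (q.1 t) (q.2 t)
      = (∑ a, ∑ b, ∑ c, ∑ e, w a b c e) ^ Fintype.card ι := by
  rw [← card_univ, ← prod_const]
  simp_rw [Fintype.prod_sum, Fintype.sum_prod_type]

lemma sgn_sq (b : Bool) : sgn b ^ 2 = 1 := by cases b <;> simp [sgn]

lemma sgn_not (b : Bool) : sgn (!b) = -sgn b := by cases b <;> simp [sgn]

lemma sgn_update_not_self {ι : Type*} [DecidableEq ι] (σ : ι → Bool) (x y : ι) :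
    sgn (Function.update σ x (!σ x) y) = if y = x then -sgn (σ y) else sgn (σ y) := by
  by_cases hy : y = x
  · subst hy
    simp [sgn_not]
  · simp [hy]

lemma sum_eq_zero_of_flip_eq_neg {ι : Type*} [Fintype ι] [DecidableEq ι] (x : ι)
    (F : (ι → Bool) → ℝ) (hF : ∀ σ, F (Function.update σ x (!σ x)) = -F σ) :
    ∑ σ, F σ = 0 := by
  have hflip : Function.Involutive fun σ : ι → Bool => Function.update σ x (!σ x) := by
    intro σ
    simp
  have := hflip.toPerm.sum_comp univ F (by simp)
  simp only [Function.Involutive.coe_toPerm, hF, sum_neg_distrib] at this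
  linarith

lemma expect_sgn_four {ι : Type*} [Fintype ι] [DecidableEq ι] (a b c e : ι) :
    𝔼 σ : ι → Bool, sgn (σ a) * sgn (σ b) * sgn (σ c) * sgn (σ e)
      = if (a = b ∧ c = e) ∨ (a = c ∧ b = e) ∨ (a = e ∧ b = c) then 1 else 0 := by
  split_ifs with hpair
  · have hone : ∀ σ : ι → Bool, sgn (σ a) * sgn (σ b) * sgn (σ c) * sgn (σ e) = 1 := by
      intro σ
      rcases hpair with ⟨rfl, rfl⟩ | ⟨rfl, rfl⟩ | ⟨rfl, rfl⟩ <;> ring_nf <;> simp [sgn_sq]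
    simp [hone]
  · rw [Fintype.expect_eq_sum_div_card, div_eq_zero_iff]
    left
    -- flip the sign at an index that occurs an odd number of times among `a, b, c, e`
    push Not at hpair
    obtain ⟨hpair₁, hpair₂, hpair₃⟩ := hpair
    by_cases hab : a = b
    · subst hab
      by_cases hac : a = c
      · subst hac
        refine sum_eq_zero_of_flip_eq_neg e _ fun σ => ?_
        simp only [sgn_update_not_self, ↓reduceIte, if_neg (hpair₁ rfl)]
        ring
      · refine sum_eq_zero_of_flip_eq_neg c _ fun σ => ?_
        simp only [sgn_update_not_self, ↓reduceIte, if_neg hac, if_neg (Ne.symm (hpair₁ rfl))]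
        ring
    · by_cases hac : a = c
      · subst hac
        refine sum_eq_zero_of_flip_eq_neg b _ fun σ => ?_
        simp only [sgn_update_not_self, ↓reduceIte, if_neg hab, if_neg (Ne.symm (hpair₂ rfl))]
        ring
      · by_cases hae : a = e
        · subst hae
          refine sum_eq_zero_of_flip_eq_neg b _ fun σ => ?_
          simp only [sgn_update_not_self, ↓reduceIte, if_neg hab, if_neg (Ne.symm (hpair₃ rfl))]
          ring
        · refine sum_eq_zero_of_flip_eq_neg a _ fun σ => ?_
          simp only [sgn_update_not_self, ↓reduceIte, if_neg (Ne.symm hab), if_neg (Ne.symm hac),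
            if_neg (Ne.symm hae)]
          ring

-- `|E[σ_a σ_b σ_c σ_e] u_a v_b u_c v_e|`, by `expect_sgn_four`
def pairingWeight {ι : Type*} [DecidableEq ι] (u v : ι → ℝ) (a b c e : ι) : ℝ :=
  (if (a = b ∧ c = e) ∨ (a = c ∧ b = e) ∨ (a = e ∧ b = c) then 1 else 0)
    * (|u a| * |v b| * (|u c| * |v e|))

lemma pairingWeight_nonneg {ι : Type*} [DecidableEq ι] (u v : ι → ℝ) (a b c e : ι) :
    0 ≤ pairingWeight u v a b c e := by
  unfold pairingWeight
  positivity

lemma ite_or_or_le (P Q R : Prop) [Decidable P] [Decidable Q] [Decidable R] :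
    (if P ∨ Q ∨ R then (1 : ℝ) else 0)
      ≤ (if P then 1 else 0) + (if Q then 1 else 0) + (if R then 1 else 0) := by
  split_ifs <;> norm_num; tauto

lemma sum_pairingWeight_le {ι : Type*} [Fintype ι] [DecidableEq ι] (u v : ι → ℝ) :
    ∑ a, ∑ b, ∑ c, ∑ e, pairingWeight u v a b c e ≤ 3 * (∑ l, u l ^ 2) * ∑ l, v l ^ 2 := by
  have hcs : (∑ l, |u l| * |v l|) ^ 2 ≤ (∑ l, u l ^ 2) * ∑ l, v l ^ 2 := by
    simpa only [sq_abs] using sum_mul_sq_le_sq_mul_sq univ (|u ·|) (|v ·|)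
  calc ∑ a, ∑ b, ∑ c, ∑ e, pairingWeight u v a b c e
      ≤ ∑ a, ∑ b, ∑ c, ∑ e, ((if a = b ∧ c = e then 1 else 0) + (if a = c ∧ b = e then 1 else 0)
          + (if a = e ∧ b = c then 1 else 0)) * (|u a| * |v b| * (|u c| * |v e|)) := by
        gcongr with a _ b _ c _ e _
        exact mul_le_mul_of_nonneg_right (ite_or_or_le _ _ _) (by positivity)
    _ = (∑ l, |u l| * |v l|) ^ 2 + (∑ l, u l ^ 2) * (∑ l, v l ^ 2)
          + (∑ l, |u l| * |v l|) ^ 2 := by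
        simp only [add_mul, sum_add_distrib, ite_and, ite_mul, one_mul, zero_mul, sum_ite_irrel,
          sum_const_zero, sum_ite_eq, mem_univ, ↓reduceIte]
        rw [sq (∑ l, |u l| * |v l|), sum_mul_sum, sum_mul_sum]
        simp only [← sum_add_distrib]
        refine sum_congr rfl fun a _ => sum_congr rfl fun b _ => ?_
        rw [← sq_abs (u a), ← sq_abs (v b)]
        ring
    _ ≤ 3 * (∑ l, u l ^ 2) * ∑ l, v l ^ 2 := by linarith

def hashSum {ι D G : Type*} [Fintype ι] [AddCommMonoid G] (h : ι → D → G) (α : ι → D) : G :=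
  ∑ t, h t (α t)

lemma hashSum_add {ι D G : Type*} [Fintype ι] [AddCommMonoid G] (h h' : ι → D → G)
    (α : ι → D) : hashSum (h + h') α = hashSum h α + hashSum h' α :=
  sum_add_distrib

lemma hashSum_single_single {ι D G : Type*} [Fintype ι] [DecidableEq ι] [DecidableEq D]
    [AddCommMonoid G] (t₀ : ι) (x : D) (z : G) (α : ι → D) :
    hashSum (Pi.single t₀ (Pi.single x z)) α = if α t₀ = x then z else 0 := by
  rw [hashSum, sum_eq_single t₀ (fun t _ ht => by simp [ht]) (by simp)]
  simp [Pi.single_apply]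

lemma expect_hashSum_eq_hashSum {ι D G : Type*} [Fintype ι] [DecidableEq ι] [Fintype D]
    [DecidableEq D] [AddCommGroup G] [Fintype G] [DecidableEq G] {α β : ι → D}
    (hαβ : α ≠ β) :
    𝔼 h : ι → D → G, (if hashSum h α = hashSum h β then (1 : ℝ) else 0)
      = 1 / Fintype.card G := by
  obtain ⟨t₀, ht₀⟩ := Function.ne_iff.mp hαβ
  set shift : G → ι → D → G := fun z => Pi.single t₀ (Pi.single (α t₀) z)
  -- adding `z` to the hash of `α t₀` in coordinate `t₀` permutes the hash functions,
  -- shifts `hashSum h α` by `z` and leaves `hashSum h β` unchanged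
  have hshift : ∀ z,
      𝔼 h : ι → D → G, (if hashSum h α = hashSum h β then (1 : ℝ) else 0)
        = 𝔼 h : ι → D → G, (if z = hashSum h β - hashSum h α then (1 : ℝ) else 0) := by
    intro z
    refine (Fintype.expect_equiv (Equiv.addRight (shift z)) _ _ fun h => ?_).symm
    simp only [Equiv.coe_addRight, hashSum_add, shift, hashSum_single_single, ↓reduceIte,
      if_neg (Ne.symm ht₀), add_zero, eq_sub_iff_add_eq']
  calc 𝔼 h : ι → D → G, (if hashSum h α = hashSum h β then (1 : ℝ) else 0)
      = 𝔼 z : G, 𝔼 h : ι → D → G,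
          (if z = hashSum h β - hashSum h α then (1 : ℝ) else 0) := by
        simp only [← hshift, Fintype.expect_const]
    _ = 1 / Fintype.card G := by
        rw [expect_comm]
        simp

section Sketch

variable {k d m : ℕ} [NeZero m]

def collisionTerm (h : Fin k → Fin d → Fin m) (s : Fin k → Fin d → Bool) (u v : Fin d → ℝ)
    (p : (Fin k → Fin d) × (Fin k → Fin d)) : ℝ :=
  (if hashSum h p.1 = hashSum h p.2 then 1 else 0)
    * (∏ t, sgn (s t (p.1 t)) * sgn (s t (p.2 t))) * ∏ t, u (p.1 t) * v (p.2 t)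

lemma tSketch_dotProduct (h : Fin k → Fin d → Fin m) (s : Fin k → Fin d → Bool)
    (u v : Fin d → ℝ) :
    tSketch k h s u ⬝ᵥ tSketch k h s v = ∑ p, collisionTerm h s u v p := by
  simp only [dotProduct, tSketch, sum_mul_sum, ite_zero_mul_ite_zero]
  rw [sum_comm, Fintype.sum_prod_type]
  refine sum_congr rfl fun α _ => ?_
  rw [sum_comm]
  refine sum_congr rfl fun β _ => ?_
  simp only [collisionTerm, hashSum]
  by_cases hαβ : ∑ t, h t (α t) = ∑ t, h t (β t)
  · simp only [hαβ, and_self, sum_ite_eq, mem_univ, ↓reduceIte, prod_mul_distrib, one_mul]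
    ring
  · simp only [hαβ, ↓reduceIte, zero_mul]
    exact sum_eq_zero fun x _ => if_neg fun hx => hαβ (hx.1.trans hx.2.symm)

lemma collisionTerm_self (h : Fin k → Fin d → Fin m) (s : Fin k → Fin d → Bool)
    (u v : Fin d → ℝ) (α : Fin k → Fin d) :
    collisionTerm h s u v (α, α) = ∏ t, u (α t) * v (α t) := by
  simp [collisionTerm, ← sq, sgn_sq]

lemma tSketch_dotProduct_sub_pow (h : Fin k → Fin d → Fin m) (s : Fin k → Fin d → Bool)
    (u v : Fin d → ℝ) :
    tSketch k h s u ⬝ᵥ tSketch k h s v - (u ⬝ᵥ v) ^ k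
      = ∑ p ∈ univ.offDiag, collisionTerm h s u v p := by
  rw [tSketch_dotProduct, ← univ_product_univ, ← diag_union_offDiag,
    sum_union (disjoint_diag_offDiag _), sum_diag, dotProduct, Fintype.sum_pow]
  simp [collisionTerm_self]

lemma tSketch_zero_dotProduct (h : Fin 0 → Fin d → Fin m)
    (s : Fin 0 → Fin d → Bool) (u v : Fin d → ℝ) :
    tSketch 0 h s u ⬝ᵥ tSketch 0 h s v = 1 := by
  simpa [sub_eq_zero] using tSketch_dotProduct_sub_pow h s u v

lemma expect_collisionTerm_mul (u v : Fin d → ℝ) (p q : (Fin k → Fin d) × (Fin k → Fin d)) :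
    𝔼 h : Fin k → Fin d → Fin m, 𝔼 s : Fin k → Fin d → Bool,
        collisionTerm h s u v p * collisionTerm h s u v q
      = (𝔼 h : Fin k → Fin d → Fin m, (if hashSum h p.1 = hashSum h p.2 then (1 : ℝ) else 0)
            * (if hashSum h q.1 = hashSum h q.2 then 1 else 0))
        * ∏ t, (𝔼 σ : Fin d → Bool,
            sgn (σ (p.1 t)) * sgn (σ (p.2 t)) * sgn (σ (q.1 t)) * sgn (σ (q.2 t)))
          * (u (p.1 t) * v (p.2 t) * (u (q.1 t) * v (q.2 t))) := by
  calc _ = 𝔼 h : Fin k → Fin d → Fin m, 𝔼 s : Fin k → Fin d → Bool,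
          ((if hashSum h p.1 = hashSum h p.2 then (1 : ℝ) else 0)
            * (if hashSum h q.1 = hashSum h q.2 then 1 else 0))
          * (((∏ t, sgn (s t (p.1 t)) * sgn (s t (p.2 t)))
              * ∏ t, sgn (s t (q.1 t)) * sgn (s t (q.2 t)))
            * ((∏ t, u (p.1 t) * v (p.2 t)) * ∏ t, u (q.1 t) * v (q.2 t))) := by
        simp only [collisionTerm]
        exact expect_congr rfl fun h _ => expect_congr rfl fun s _ => by ring
    _ = _ := by
        simp only [← mul_expect, ← expect_mul, ← prod_mul_distrib]
        rw [expect_pi_prod fun t (σ : Fin d → Bool) =>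
          sgn (σ (p.1 t)) * sgn (σ (p.2 t)) * (sgn (σ (q.1 t)) * sgn (σ (q.2 t)))
            * (u (p.1 t) * v (p.2 t) * (u (q.1 t) * v (q.2 t)))]
        simp only [expect_mul, mul_assoc]

lemma expect_collisionTerm_mul_le (u v : Fin d → ℝ) {p : (Fin k → Fin d) × (Fin k → Fin d)}
    (hp : p.1 ≠ p.2) (q : (Fin k → Fin d) × (Fin k → Fin d)) :
    𝔼 h : Fin k → Fin d → Fin m, 𝔼 s : Fin k → Fin d → Bool,
        collisionTerm h s u v p * collisionTerm h s u v q
      ≤ (∏ t, pairingWeight u v (p.1 t) (p.2 t) (q.1 t) (q.2 t)) / m := by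
  rw [expect_collisionTerm_mul]
  simp only [expect_sgn_four]
  set collide := 𝔼 h : Fin k → Fin d → Fin m,
    (if hashSum h p.1 = hashSum h p.2 then (1 : ℝ) else 0)
      * (if hashSum h q.1 = hashSum h q.2 then 1 else 0)
  have hcollide_nonneg : 0 ≤ collide := expect_nonneg fun h _ => by positivity
  have hcollide_le : collide ≤ 1 / m := by
    calc collide ≤ 𝔼 h : Fin k → Fin d → Fin m,
          (if hashSum h p.1 = hashSum h p.2 then (1 : ℝ) else 0) :=
          expect_le_expect fun h _ =>
            mul_le_of_le_one_right (by positivity) (by split_ifs <;> norm_num)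
      _ = 1 / m := by rw [expect_hashSum_eq_hashSum hp, Fintype.card_fin]
  have hweight : ∏ t, (if (p.1 t = p.2 t ∧ q.1 t = q.2 t) ∨ (p.1 t = q.1 t ∧ p.2 t = q.2 t)
        ∨ (p.1 t = q.2 t ∧ p.2 t = q.1 t) then (1 : ℝ) else 0)
          * (u (p.1 t) * v (p.2 t) * (u (q.1 t) * v (q.2 t)))
      ≤ ∏ t, pairingWeight u v (p.1 t) (p.2 t) (q.1 t) (q.2 t) := by
    refine (le_abs_self _).trans_eq ?_
    rw [abs_prod]
    refine prod_congr rfl fun t _ => ?_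
    rw [pairingWeight, abs_mul, abs_of_nonneg (by positivity), abs_mul, abs_mul, abs_mul]
  calc collide * _ ≤ collide * ∏ t, pairingWeight u v (p.1 t) (p.2 t) (q.1 t) (q.2 t) :=
        mul_le_mul_of_nonneg_left hweight hcollide_nonneg
    _ ≤ 1 / m * ∏ t, pairingWeight u v (p.1 t) (p.2 t) (q.1 t) (q.2 t) :=
        mul_le_mul_of_nonneg_right hcollide_le
          (prod_nonneg fun t _ => pairingWeight_nonneg _ _ _ _ _ _)
    _ = _ := by ring

theorem expect_sq_tSketch_dotProduct_sub_pow_le (u v : Fin d → ℝ) :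
    𝔼 h : Fin k → Fin d → Fin m, 𝔼 s : Fin k → Fin d → Bool,
        (tSketch k h s u ⬝ᵥ tSketch k h s v - (u ⬝ᵥ v) ^ k) ^ 2
      ≤ (3 * (∑ l, u l ^ 2) * ∑ l, v l ^ 2) ^ k / m := by
  have hweight_nonneg : ∀ p q : (Fin k → Fin d) × (Fin k → Fin d),
      0 ≤ (∏ t, pairingWeight u v (p.1 t) (p.2 t) (q.1 t) (q.2 t)) / m := fun p q =>
    div_nonneg (prod_nonneg fun t _ => pairingWeight_nonneg _ _ _ _ _ _) (Nat.cast_nonneg m)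
  calc _ = ∑ p ∈ univ.offDiag, ∑ q ∈ univ.offDiag,
        𝔼 h : Fin k → Fin d → Fin m, 𝔼 s : Fin k → Fin d → Bool,
          collisionTerm h s u v p * collisionTerm h s u v q := by
        simp only [tSketch_dotProduct_sub_pow, sq, sum_mul_sum, expect_sum_comm]
    _ ≤ ∑ p ∈ (univ : Finset (Fin k → Fin d)).offDiag,
        ∑ q ∈ (univ : Finset (Fin k → Fin d)).offDiag,
          (∏ t, pairingWeight u v (p.1 t) (p.2 t) (q.1 t) (q.2 t)) / m :=
        sum_le_sum fun p hp => sum_le_sum fun q _ =>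
          expect_collisionTerm_mul_le u v (mem_offDiag.1 hp).2.2 q
    _ ≤ ∑ p : (Fin k → Fin d) × (Fin k → Fin d), ∑ q : (Fin k → Fin d) × (Fin k → Fin d),
        (∏ t, pairingWeight u v (p.1 t) (p.2 t) (q.1 t) (q.2 t)) / m :=
        (sum_le_sum fun p _ => sum_le_univ_sum_of_nonneg fun q => hweight_nonneg p q).trans
          (sum_le_univ_sum_of_nonneg fun p => sum_nonneg fun q _ => hweight_nonneg p q)
    _ = (∑ a, ∑ b, ∑ c, ∑ e, pairingWeight u v a b c e) ^ k / m := by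
        simp only [← sum_div, sum_sum_prod_eq_pow, Fintype.card_fin]
    _ ≤ (3 * (∑ l, u l ^ 2) * ∑ l, v l ^ 2) ^ k / m := by
        gcongr
        · exact sum_nonneg fun a _ => sum_nonneg fun b _ => sum_nonneg fun c _ =>
            sum_nonneg fun e _ => pairingWeight_nonneg _ _ _ _ _ _
        · exact sum_pairingWeight_le u v

lemma expect_sq_tSketch_castLE_dotProduct_sub_pow_le {r : ℕ} (hk : k ≤ r)
    (u v : Fin d → ℝ) :
    𝔼 h : Fin r → Fin d → Fin m, 𝔼 s : Fin r → Fin d → Bool,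
        (tSketch k (fun t => h (Fin.castLE hk t)) (fun t => s (Fin.castLE hk t)) u
          ⬝ᵥ tSketch k (fun t => h (Fin.castLE hk t)) (fun t => s (Fin.castLE hk t)) v
          - (u ⬝ᵥ v) ^ k) ^ 2
      ≤ (3 * (∑ l, u l ^ 2) * ∑ l, v l ^ 2) ^ k / m := by
  have hmarginal := fun (h : Fin k → Fin d → Fin m) => expect_comp_castLE hk
    fun s => (tSketch k h s u ⬝ᵥ tSketch k h s v - (u ⬝ᵥ v) ^ k) ^ 2
  simp only [hmarginal, expect_comp_castLE hk fun h => 𝔼 s : Fin k → Fin d → Bool,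
    (tSketch k h s u ⬝ᵥ tSketch k h s v - (u ⬝ᵥ v) ^ k) ^ 2]
  exact expect_sq_tSketch_dotProduct_sub_pow_le u v

end Sketch

section PolyTensorSketch

variable {n d m r : ℕ} (U V : Matrix (Fin n) (Fin d) ℝ) (c : Fin (r + 1) → ℝ)

lemma mul_transpose_apply_eq_dotProduct (i j : Fin n) : (U * Vᵀ) i j = U i ⬝ᵥ V j := rfl

lemma ptsGamma_apply [NeZero m] (h : Fin r → Fin d → Fin m) (s : Fin r → Fin d → Bool)
    (i j : Fin n) :
    ptsGamma r c h s U V i j = ∑ ℓ : Fin (r + 1), c ℓ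
      * (tSketch ℓ (fun t => h (Fin.castLE ℓ.is_le t)) (fun t => s (Fin.castLE ℓ.is_le t)) (U i)
        ⬝ᵥ tSketch ℓ (fun t => h (Fin.castLE ℓ.is_le t)) (fun t => s (Fin.castLE ℓ.is_le t))
          (V j)) := by
  simp only [ptsGamma, Matrix.sum_apply, Matrix.smul_apply, smul_eq_mul]
  rfl

lemma sub_ptsGamma_apply [NeZero m] (f : ℝ → ℝ) (h : Fin r → Fin d → Fin m)
    (s : Fin r → Fin d → Bool) (i j : Fin n) :
    ((Matrix.of fun i j => f ((U * Vᵀ) i j)) - ptsGamma r c h s U V) i j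
      = (f ((U * Vᵀ) i j) - ∑ ℓ : Fin (r + 1), c ℓ * (U * Vᵀ) i j ^ (ℓ : ℕ))
        - ∑ ℓ : Fin r, c ℓ.succ
          * (tSketch ℓ.succ (fun t => h (Fin.castLE ℓ.succ.is_le t))
                (fun t => s (Fin.castLE ℓ.succ.is_le t)) (U i)
              ⬝ᵥ tSketch ℓ.succ (fun t => h (Fin.castLE ℓ.succ.is_le t))
                (fun t => s (Fin.castLE ℓ.succ.is_le t)) (V j)
            - (U i ⬝ᵥ V j) ^ (ℓ.succ : ℕ)) := by
  rw [Matrix.sub_apply, Matrix.of_apply, ptsGamma_apply, Fin.sum_univ_succ, Fin.sum_univ_succ,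
    mul_transpose_apply_eq_dotProduct]
  simp only [Fin.val_zero, tSketch_zero_dotProduct, pow_zero, mul_sub, sum_sub_distrib]
  ring

lemma sq_sub_ptsGamma_apply_le [NeZero m] (f : ℝ → ℝ) (h : Fin r → Fin d → Fin m)
    (s : Fin r → Fin d → Bool) (i j : Fin n) :
    (((Matrix.of fun i j => f ((U * Vᵀ) i j)) - ptsGamma r c h s U V) i j) ^ 2
      ≤ 2 * (f ((U * Vᵀ) i j) - ∑ ℓ : Fin (r + 1), c ℓ * (U * Vᵀ) i j ^ (ℓ : ℕ)) ^ 2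
        + 2 * (r * ∑ ℓ : Fin r, c ℓ.succ ^ 2
          * (tSketch ℓ.succ (fun t => h (Fin.castLE ℓ.succ.is_le t))
                (fun t => s (Fin.castLE ℓ.succ.is_le t)) (U i)
              ⬝ᵥ tSketch ℓ.succ (fun t => h (Fin.castLE ℓ.succ.is_le t))
                (fun t => s (Fin.castLE ℓ.succ.is_le t)) (V j)
            - (U i ⬝ᵥ V j) ^ (ℓ.succ : ℕ)) ^ 2) := by
  rw [sub_ptsGamma_apply, sub_eq_add_neg _ (∑ ℓ : Fin r, _)]
  refine add_sq_le.trans ?_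
  rw [mul_add, neg_sq]
  gcongr
  simpa only [card_univ, Fintype.card_fin, mul_pow] using
    sq_sum_le_card_mul_sum_sq (s := univ) (f := fun ℓ : Fin r => c ℓ.succ * _)

lemma expect_sq_sub_ptsGamma_apply_le [NeZero m] (f : ℝ → ℝ) (i j : Fin n) :
    𝔼 h : Fin r → Fin d → Fin m, 𝔼 s : Fin r → Fin d → Bool,
        (((Matrix.of fun i j => f ((U * Vᵀ) i j)) - ptsGamma r c h s U V) i j) ^ 2
      ≤ 2 * (f ((U * Vᵀ) i j) - ∑ ℓ : Fin (r + 1), c ℓ * (U * Vᵀ) i j ^ (ℓ : ℕ)) ^ 2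
        + 2 * (r * ∑ ℓ : Fin r, c ℓ.succ ^ 2
          * ((3 * (∑ l, U i l ^ 2) * ∑ l, V j l ^ 2) ^ (ℓ.succ : ℕ) / m)) := by
  refine (expect_le_expect fun h _ => expect_le_expect fun s _ =>
    sq_sub_ptsGamma_apply_le U V c f h s i j).trans ?_
  simp only [expect_add_distrib, ← mul_expect, expect_sum_comm, Fintype.expect_const]
  gcongr with ℓ
  exact expect_sq_tSketch_castLE_dotProduct_sub_pow_le (Fin.is_le ℓ.succ) (U i) (V j)

lemma sum_sum_sq_sub_eq_vnormSq (f : ℝ → ℝ) :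
    ∑ i, ∑ j, (f ((U * Vᵀ) i j) - ∑ ℓ : Fin (r + 1), c ℓ * (U * Vᵀ) i j ^ (ℓ : ℕ)) ^ 2
      = vnormSq ((vand r U V).mulVec c - fvec f U V) := by
  rw [vnormSq, Fintype.sum_prod_type]
  refine sum_congr rfl fun i _ => sum_congr rfl fun j _ => ?_
  rw [← neg_sub, neg_sq]
  simp [vand, fvec, Matrix.mulVec, dotProduct, mul_comm]

lemma wReg_succ_sq (ℓ : Fin r) :
    wReg r m U V ℓ.succ ^ 2 = r * (2 + 3 ^ (ℓ.succ : ℕ)) * (∑ i, (∑ l, U i l ^ 2) ^ (ℓ.succ : ℕ))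
      * (∑ i, (∑ l, V i l ^ 2) ^ (ℓ.succ : ℕ)) / m := by
  rw [wReg, if_neg (show (ℓ.succ : ℕ) ≠ 0 from Nat.succ_ne_zero ℓ), Real.sq_sqrt (by positivity)]

lemma vnormSq_diagonal_wReg_mulVec :
    vnormSq ((Matrix.diagonal (wReg r m U V)).mulVec c)
      = ∑ ℓ : Fin r, c ℓ.succ ^ 2 * wReg r m U V ℓ.succ ^ 2 := by
  simp [vnormSq, Matrix.mulVec_diagonal, Fin.sum_univ_succ, wReg, mul_pow, mul_comm]

lemma sum_sum_le_vnormSq_diagonal_wReg_mulVec :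
    (r : ℝ) * ∑ i, ∑ j, ∑ ℓ : Fin r, c ℓ.succ ^ 2
        * ((3 * (∑ l, U i l ^ 2) * ∑ l, V j l ^ 2) ^ (ℓ.succ : ℕ) / m)
      ≤ vnormSq ((Matrix.diagonal (wReg r m U V)).mulVec c) := by
  rw [vnormSq_diagonal_wReg_mulVec]
  calc _ = ∑ i, ∑ j, ∑ ℓ : Fin r, c ℓ.succ ^ 2 * (r * 3 ^ (ℓ.succ : ℕ) / m)
          * ((∑ l, U i l ^ 2) ^ (ℓ.succ : ℕ) * (∑ l, V j l ^ 2) ^ (ℓ.succ : ℕ)) := by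
        simp only [mul_sum _ _ (r : ℝ)]
        exact sum_congr rfl fun i _ => sum_congr rfl fun j _ => sum_congr rfl fun ℓ _ => by ring
    _ = ∑ ℓ : Fin r, c ℓ.succ ^ 2 * (r * 3 ^ (ℓ.succ : ℕ) / m)
          * ((∑ i, (∑ l, U i l ^ 2) ^ (ℓ.succ : ℕ)) * ∑ j, (∑ l, V j l ^ 2) ^ (ℓ.succ : ℕ)) := by
        rw [sum_comm_cycle]
        simp only [sum_mul_sum]
        simp only [mul_sum]
    _ ≤ _ := by
        refine sum_le_sum fun ℓ _ => ?_
        rw [wReg_succ_sq]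
        calc _ = c ℓ.succ ^ 2 * r * (∑ i, (∑ l, U i l ^ 2) ^ (ℓ.succ : ℕ))
              * (∑ j, (∑ l, V j l ^ 2) ^ (ℓ.succ : ℕ)) / m * 3 ^ (ℓ.succ : ℕ) := by ring
          _ ≤ c ℓ.succ ^ 2 * r * (∑ i, (∑ l, U i l ^ 2) ^ (ℓ.succ : ℕ))
              * (∑ j, (∑ l, V j l ^ 2) ^ (ℓ.succ : ℕ)) / m * (2 + 3 ^ (ℓ.succ : ℕ)) := by
            gcongr
            linarith
          _ = _ := by ring

end PolyTensorSketch

/-- **Regression upper bound on the Poly-TensorSketch error** (Lemma 2): for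
every coefficient vector `c`,
`E ‖f⊙(UVᵀ) − Γ‖_F² ≤ 2 ‖X c − f⃗‖² + 2 ‖W c‖²`. -/
theorem polyTensorSketch_regression_bound {n d m r : ℕ} [NeZero m]
    (U V : Matrix (Fin n) (Fin d) ℝ) (f : ℝ → ℝ) (c : Fin (r + 1) → ℝ) :
    expHS (fun (h : Fin r → Fin d → Fin m) (s : Fin r → Fin d → Bool) =>
      frobSq ((Matrix.of fun i j => f ((U * Vᵀ) i j)) - ptsGamma r c h s U V))
    ≤ 2 * vnormSq ((vand r U V).mulVec c - fvec f U V)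
      + 2 * vnormSq ((Matrix.diagonal (wReg r m U V)).mulVec c) := by
  rw [expHS_eq_expect, ← sum_sum_sq_sub_eq_vnormSq U V c f]
  simp only [frobSq, expect_sum_comm]
  refine (sum_le_sum fun i _ => sum_le_sum fun j _ =>
    expect_sq_sub_ptsGamma_apply_le U V c f i j).trans ?_
  simp only [sum_add_distrib, ← mul_sum]
  gcongr
  exact sum_sum_le_vnormSq_diagonal_wReg_mulVec U V c
end
end

section
/- Let U, V ∈ ℝ^{n×d} and k ≥ 1 an integer, and let T_U^{(k)}, T_V^{(k)} ∈ ℝ^{n×m} be the degree-k TensorSketches of U and V built from the same random hash functions h_1,…,h_k and sign functions s_1,…,s_k. Then E[ T_U^{(k)} T_V^{(k)ᵀ} ] = (UVᵀ)^{⊙k} entrywise, where A^{⊙k} denotes the matrix of entrywise k-th powers [A_{ij}^k]. -/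
open Matrix
open scoped BigOperators

noncomputable section

set_option linter.unnecessarySeqFocus false
set_option linter.unusedVariables false
set_option linter.unusedTactic false

lemma sign_pair_sum {d : ℕ} (x y : Fin d) :
    ∑ g : Fin d → Bool, sgn (g x) * sgn (g y) = if x = y then (2:ℝ)^d else 0 := by
  have key : ∀ g : Fin d → Bool, sgn (g x) * sgn (g y)
      = ∏ z : Fin d, ((if z = x then sgn (g z) else 1) * (if z = y then sgn (g z) else 1)) := by
    intro g
    rw [Finset.prod_mul_distrib, Finset.prod_ite_eq', Finset.prod_ite_eq']
    simp
  simp_rw [key]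
  rw [← Fintype.piFinset_univ, ← Finset.prod_univ_sum (fun _ => (Finset.univ : Finset Bool)) (fun z v => (if z = x then sgn v else 1) * (if z = y then sgn v else 1))]
  by_cases hxy : x = y
  · subst hxy
    rw [if_pos rfl]
    have : ∀ z : Fin d, (∑ v : Bool, (if z = x then sgn v else 1) * (if z = x then sgn v else 1)) = 2 := by
      intro z; by_cases hz : z = x <;> simp [hz, sgn] <;> norm_num
    rw [Finset.prod_congr rfl (fun z _ => this z)]
    simp
  · rw [if_neg hxy]
    apply Finset.prod_eq_zero (Finset.mem_univ x)
    simp [hxy, sgn]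

lemma signProdSum {d k : ℕ} (i i' : Fin k → Fin d) :
    ∑ s : Fin k → Fin d → Bool, ∏ t, sgn (s t (i t)) * sgn (s t (i' t))
      = if i = i' then ((2:ℝ)^d)^k else 0 := by
  rw [← Fintype.piFinset_univ, ← Finset.prod_univ_sum
    (fun _ => (Finset.univ : Finset (Fin d → Bool)))
    (fun t g => sgn (g (i t)) * sgn (g (i' t)))]
  simp_rw [sign_pair_sum]
  by_cases h : i = i'
  · subst h; simp
  · rw [if_neg h]
    obtain ⟨t, ht⟩ := Function.ne_iff.mp h
    exact Finset.prod_eq_zero (Finset.mem_univ t) (if_neg ht)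

lemma sum4_comm {α β γ δ : Type*} [Fintype α] [Fintype β] [Fintype γ] [Fintype δ]
    {M : Type*} [AddCommMonoid M] (f : α → β → γ → δ → M) :
    (∑ a : α, ∑ b : β, ∑ c : γ, ∑ e : δ, f a b c e)
      = ∑ c : γ, ∑ e : δ, ∑ a : α, ∑ b : β, f a b c e := by
  have h1 : ∀ a : α, (∑ b : β, ∑ c : γ, ∑ e : δ, f a b c e)
      = ∑ c : γ, ∑ e : δ, ∑ b : β, f a b c e := by
    intro a
    rw [Finset.sum_comm]
    exact Finset.sum_congr rfl fun c _ => Finset.sum_comm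
  simp_rw [h1]
  rw [Finset.sum_comm]
  exact Finset.sum_congr rfl fun c _ => Finset.sum_comm

lemma key_sum {n d m : ℕ} [NeZero m] (k : ℕ)
    (U V : Matrix (Fin n) (Fin d) ℝ) (a b : Fin n) :
    (∑ h : Fin k → Fin d → Fin m, ∑ s : Fin k → Fin d → Bool,
      (tSketchM k h s U * (tSketchM k h s V)ᵀ) a b)
      = ((m:ℝ)^d)^k * ((2:ℝ)^d)^k * ((U * Vᵀ) a b)^k := by
  have prodswap : ∀ (s : Fin k → Fin d → Bool) (i i' : Fin k → Fin d),
      (∏ t, (sgn (s t (i t)) * U a (i t))) * (∏ t, (sgn (s t (i' t)) * V b (i' t)))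
      = (∏ t, sgn (s t (i t)) * sgn (s t (i' t))) * (∏ t, U a (i t) * V b (i' t)) := by
    intro s i i'
    rw [← Finset.prod_mul_distrib, ← Finset.prod_mul_distrib]
    exact Finset.prod_congr rfl (fun t _ => by ring)
  calc (∑ h : Fin k → Fin d → Fin m, ∑ s : Fin k → Fin d → Bool,
      (tSketchM k h s U * (tSketchM k h s V)ᵀ) a b)
      = ∑ h : Fin k → Fin d → Fin m, ∑ s : Fin k → Fin d → Bool,
          ∑ i : Fin k → Fin d, ∑ i' : Fin k → Fin d,
          if (∑ t, h t (i' t)) = (∑ t, h t (i t)) then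
            (∏ t, sgn (s t (i t)) * sgn (s t (i' t))) * (∏ t, U a (i t) * V b (i' t))
          else 0 := by
        simp only [tSketchM, tSketch, Matrix.mul_apply, Matrix.transpose_apply,
          Matrix.of_apply]
        simp_rw [Finset.sum_mul_sum, ite_mul, mul_ite, mul_zero, zero_mul, ite_self]
        apply Finset.sum_congr rfl; intro h _
        apply Finset.sum_congr rfl; intro s _
        rw [Finset.sum_comm]
        apply Finset.sum_congr rfl; intro i _
        rw [Finset.sum_comm]
        apply Finset.sum_congr rfl; intro i' _
        rw [Finset.sum_ite_eq, if_pos (Finset.mem_univ _)]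
        split_ifs with hc
        · exact prodswap s i i'
        · rfl
    _ = ∑ i : Fin k → Fin d, ∑ i' : Fin k → Fin d,
          ∑ h : Fin k → Fin d → Fin m, ∑ s : Fin k → Fin d → Bool,
          if (∑ t, h t (i' t)) = (∑ t, h t (i t)) then
            (∏ t, sgn (s t (i t)) * sgn (s t (i' t))) * (∏ t, U a (i t) * V b (i' t))
          else 0 := sum4_comm _
    _ = ∑ i : Fin k → Fin d, ∑ i' : Fin k → Fin d,
          (if i = i' then ((m:ℝ)^d)^k * (((2:ℝ)^d)^k * (∏ t, U a (i t) * V b (i t))) else 0) := by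
        apply Finset.sum_congr rfl; intro i _
        apply Finset.sum_congr rfl; intro i' _
        have step1 : ∀ h : Fin k → Fin d → Fin m,
            (∑ s : Fin k → Fin d → Bool,
              if (∑ t, h t (i' t)) = (∑ t, h t (i t)) then
                (∏ t, sgn (s t (i t)) * sgn (s t (i' t))) * (∏ t, U a (i t) * V b (i' t))
              else 0)
            = if (∑ t, h t (i' t)) = (∑ t, h t (i t)) then
                (if i = i' then ((2:ℝ)^d)^k else 0) * (∏ t, U a (i t) * V b (i' t))
              else 0 := by
          intro h
          split_ifs with hc hii
          · rw [← Finset.sum_mul, signProdSum, if_pos hii]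
          · rw [← Finset.sum_mul, signProdSum, if_neg hii]
          · simp
        simp_rw [step1]
        by_cases hii : i = i'
        · subst hii
          rw [if_pos rfl]
          rw [Finset.sum_congr rfl (fun h _ => if_pos rfl)]
          simp only [if_pos rfl, Finset.sum_const, Finset.card_univ, Fintype.card_fun,
            Fintype.card_fin, nsmul_eq_mul]
          push_cast
          ring
        · simp [hii]
    _ = ((m:ℝ)^d)^k * ((2:ℝ)^d)^k * ((U * Vᵀ) a b)^k := by
        simp_rw [Finset.sum_ite_eq, Finset.mem_univ, if_true, ← Finset.mul_sum]
        rw [← Fintype.piFinset_univ, ← Finset.prod_univ_sum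
          (fun _ => (Finset.univ : Finset (Fin d))) (fun t x => U a x * V b x)]
        simp only [Matrix.mul_apply, Matrix.transpose_apply, Finset.prod_const,
          Finset.card_univ, Fintype.card_fin]
        ring

/-- **TensorSketch is an unbiased estimator of entrywise powers**:
`E[T_U^{(k)} T_V^{(k)ᵀ}] = (UVᵀ)^{⊙k}` entrywise. -/
theorem tensorSketch_matrix_unbiased {n d m : ℕ} [NeZero m] (k : ℕ) (hk : 1 ≤ k)
    (U V : Matrix (Fin n) (Fin d) ℝ) :
    ∀ a b : Fin n,
      expHS (fun (h : Fin k → Fin d → Fin m) (s : Fin k → Fin d → Bool) =>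
        (tSketchM k h s U * (tSketchM k h s V)ᵀ) a b)
      = ((U * Vᵀ) a b) ^ k := by
  intro a b
  have hm : (0:ℝ) < ((m:ℝ)^d)^k := by
    have : (0:ℝ) < (m:ℝ) := by
      exact_mod_cast Nat.pos_of_ne_zero (NeZero.ne m)
    positivity
  have h2 : (0:ℝ) < ((2:ℝ)^d)^k := by positivity
  rw [expHS, key_sum]
  have cH : ((Fintype.card (Fin k → Fin d → Fin m) : ℝ)) = ((m:ℝ)^d)^k := by
    simp [Fintype.card_fun]
  have cS : ((Fintype.card (Fin k → Fin d → Bool) : ℝ)) = ((2:ℝ)^d)^k := by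
    simp [Fintype.card_fun]
  push_cast
  rw [cH, cS]
  exact mul_div_cancel_left₀ _ (ne_of_gt (mul_pos hm h2))
end
end

section
/- Fix u ∈ ℝ^d, k ≥ 2, hash functions h_1,…,h_k : [d] → {0,…,m−1} and sign functions s_1,…,s_k : [d] → {−1,+1}. Let T_u^{(k−1)} ∈ ℝ^m be the degree-(k−1) TensorSketch of u built from h_1,…,h_{k−1}, s_1,…,s_{k−1}, let C_u ∈ ℝ^m be the CountSketch of u built from h_k, s_k (with buckets indexed by {0,…,m−1}), and let T_u^{(k)} be the degree-k TensorSketch built from all of h_1,…,h_k, s_1,…,s_k. Then T_u^{(k)} is the circular convolution modulo m of T_u^{(k−1)} and C_u: for every j ∈ {0,…,m−1}, (T_u^{(k)})_j = Σ_{a,b ∈ {0,…,m−1} : a+b ≡ j (mod m)} (T_u^{(k−1)})_a (C_u)_b. -/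
open scoped BigOperators

noncomputable section

/-- CountSketch of `u ∈ ℝ^d` using hash function `h : [d] → {0,…,m-1}` and sign
function `s : [d] → {−1,+1}`: `(C_u)_j = Σ_{i : h(i) = j} s(i) u_i`. -/
def countSketch {d m : ℕ} (h : Fin d → Fin m) (s : Fin d → Bool)
    (u : Fin d → ℝ) : Fin m → ℝ :=
  fun j => ∑ i, if h i = j then sgn (s i) * u i else 0

/-- Auxiliary: swap the outer pair of sums with the inner pair. -/
lemma sum4_swap {α β γ δ M : Type*} [Fintype α] [Fintype β] [Fintype γ] [Fintype δ]
    [AddCommMonoid M] (f : α → β → γ → δ → M) :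
    ∑ a, ∑ b, ∑ c, ∑ e, f a b c e = ∑ c, ∑ e, ∑ a, ∑ b, f a b c e := by
  calc ∑ a, ∑ b, ∑ c, ∑ e, f a b c e
      = ∑ a, ∑ c, ∑ e, ∑ b, f a b c e := Finset.sum_congr rfl fun a _ => by
        rw [Finset.sum_comm]; exact Finset.sum_congr rfl fun c _ => Finset.sum_comm
    _ = ∑ c, ∑ a, ∑ e, ∑ b, f a b c e := Finset.sum_comm
    _ = ∑ c, ∑ e, ∑ a, ∑ b, f a b c e := Finset.sum_congr rfl fun c _ => Finset.sum_comm

set_option maxHeartbeats 1000000 in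
/-- **TensorSketch recursion as circular convolution** (deterministic): the
degree-`k` TensorSketch is the circular convolution (mod `m`) of the
degree-`(k-1)` TensorSketch built from `h_1,…,h_{k-1}, s_1,…,s_{k-1}` and
the CountSketch built from `h_k, s_k`. -/
theorem tensorSketch_circular_convolution {d m : ℕ} [NeZero m] (k : ℕ) (hk : 2 ≤ k)
    (h : Fin k → Fin d → Fin m) (s : Fin k → Fin d → Bool) (u : Fin d → ℝ) :
    ∀ j : Fin m,
      tSketch k h s u j =
        ∑ a : Fin m, ∑ b : Fin m,
          if a + b = j then
            tSketch (k - 1)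
                (fun t => h ⟨t.1, by have := t.2; omega⟩)
                (fun t => s ⟨t.1, by have := t.2; omega⟩) u a
              * countSketch (h ⟨k - 1, by omega⟩) (s ⟨k - 1, by omega⟩) u b
          else 0 := by
  intro j
  obtain ⟨n, rfl⟩ : ∃ n, k = n + 1 := ⟨k - 1, by omega⟩
  classical
  simp only [tSketch, countSketch]
  have hcast : ∀ t : Fin n, (⟨t.1, by omega⟩ : Fin (n+1)) = t.castSucc := fun t => rfl
  have hlast : (⟨n + 1 - 1, by omega⟩ : Fin (n+1)) = Fin.last n := rfl
  -- LHS: split off the last coordinate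
  rw [← Equiv.sum_comp (Fin.snocEquiv (fun _ => Fin d))]
  rw [Fintype.sum_prod_type]
  simp only [Fin.snocEquiv_apply, Fin.sum_univ_castSucc, Fin.prod_univ_castSucc,
    Fin.snoc_castSucc, Fin.snoc_last]
  -- RHS: expand each term
  have hterm : ∀ a b : Fin m,
      (if a + b = j then
          (∑ i : Fin (n+1-1) → Fin d, if (∑ t : Fin (n+1-1), h ⟨t.1, by omega⟩ (i t)) = a
              then ∏ t : Fin (n+1-1), (sgn (s ⟨t.1, by omega⟩ (i t)) * u (i t)) else 0)
          * (∑ x, if h ⟨n+1-1, by omega⟩ x = b then sgn (s ⟨n+1-1, by omega⟩ x) * u x else 0)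
        else 0)
      = ∑ x : Fin d, ∑ i : Fin (n+1-1) → Fin d,
          (if (∑ t : Fin (n+1-1), h ⟨t.1, by omega⟩ (i t)) = a ∧ h ⟨n+1-1, by omega⟩ x = b ∧ a + b = j
            then (∏ t : Fin (n+1-1), (sgn (s ⟨t.1, by omega⟩ (i t)) * u (i t))) * (sgn (s ⟨n+1-1, by omega⟩ x) * u x)
            else 0) := by
    intro a b
    split
    · rw [Finset.sum_mul_sum, Finset.sum_comm]
      refine Finset.sum_congr rfl fun x _ => Finset.sum_congr rfl fun i _ => ?_
      simp_all [ite_and]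
      split <;> split <;> simp_all
    · simp_all
  simp only [hterm]
  trans ((∑ x : Fin d, ∑ i : Fin n → Fin d, ∑ a : Fin m, ∑ b : Fin m,
      (if (∑ t : Fin n, h t.castSucc (i t)) = a ∧ h (Fin.last n) x = b ∧ a + b = j
        then (∏ t : Fin n, (sgn (s t.castSucc (i t)) * u (i t))) * (sgn (s (Fin.last n) x) * u x)
        else 0)) : ℝ)
  · apply Finset.sum_congr rfl
    intro x _
    apply Finset.sum_congr rfl
    intro i _
    simp [ite_and, Finset.sum_ite_irrel, Finset.sum_ite_eq, Finset.sum_ite_eq', Finset.sum_const_zero]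
  · exact (sum4_swap _).symm
end
end

section
/- Let U, V ∈ ℝ^{n×d}, f : ℝ → ℝ, c = (c_0,…,c_r) ∈ ℝ^{r+1}, and let Ū ∈ ℝ^{k×d} be an ε-coreset of U with mapping P : [n] → [k]. Assume the function x ↦ (f(x) − Σ_{j=0}^r c_j x^j)² is L-Lipschitz. With X, f⃗ the Vandermonde matrix and target vector of (U, V, f), and X̄, f̄, D those of the coreset regression, it holds that | ‖X c − f⃗‖_2² − ‖D^{1/2}(X̄ c − f̄)‖_2² | ≤ L ε ( Σ_{j=1}^n ‖v_j‖_2 ), where v_j is the j-th row of V. -/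
open Matrix
open scoped BigOperators

noncomputable section

/-- **Coreset regression approximates the full regression objective.**
If `Ū` is an `ε`-coreset of `U` with mapping `P` and `x ↦ (f(x) − Σ_j c_j x^j)²`
is `L`-Lipschitz, then `| ‖Xc − f⃗‖² − ‖D^{1/2}(X̄c − f̄)‖² | ≤ L ε Σ_j ‖v_j‖`,
where `‖Xc − f⃗‖² = Σ_{i,j} (Σ_ℓ c_ℓ (UVᵀ)_{ij}^ℓ − f((UVᵀ)_{ij}))²` and
`‖D^{1/2}(X̄c − f̄)‖² = Σ_{i,j} |{s : P(s) = i}| (Σ_ℓ c_ℓ (ŪVᵀ)_{ij}^ℓ − f((ŪVᵀ)_{ij}))²`. -/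
theorem coreset_regression_error_bound {n k d r : ℕ}
    (U V : Matrix (Fin n) (Fin d) ℝ) (Ubar : Matrix (Fin k) (Fin d) ℝ)
    (f : ℝ → ℝ) (c : Fin (r + 1) → ℝ) (L ε : ℝ)
    (P : Fin n → Fin k)
    (hcore : ∑ i, Real.sqrt (∑ l, (U i l - Ubar (P i) l) ^ 2) ≤ ε)
    (hL : ∀ x y : ℝ,
      |(f x - ∑ ℓ : Fin (r + 1), c ℓ * x ^ (ℓ : ℕ)) ^ 2
        - (f y - ∑ ℓ : Fin (r + 1), c ℓ * y ^ (ℓ : ℕ)) ^ 2| ≤ L * |x - y|) :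
    |(∑ i : Fin n, ∑ j : Fin n,
        ((∑ ℓ : Fin (r + 1), c ℓ * ((U * Vᵀ) i j) ^ (ℓ : ℕ)) - f ((U * Vᵀ) i j)) ^ 2)
      - (∑ i : Fin k, ∑ j : Fin n,
        ((Finset.univ.filter (fun t => P t = i)).card : ℝ) *
          ((∑ ℓ : Fin (r + 1), c ℓ * ((Ubar * Vᵀ) i j) ^ (ℓ : ℕ))
            - f ((Ubar * Vᵀ) i j)) ^ 2)|
      ≤ L * ε * (∑ j, Real.sqrt (∑ l, (V j l) ^ 2)) := by
  have hLnn : 0 ≤ L := by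
    have h := hL 0 1
    have h0 : (0:ℝ) ≤ L * |(0:ℝ) - 1| := le_trans (abs_nonneg _) h
    simpa using h0
  have htnn : 0 ≤ ∑ j, Real.sqrt (∑ l, (V j l) ^ 2) :=
    Finset.sum_nonneg fun _ _ => Real.sqrt_nonneg _
  set g : ℝ → ℝ := fun x => ((∑ ℓ : Fin (r + 1), c ℓ * x ^ (ℓ : ℕ)) - f x) ^ 2 with hg
  have hL' : ∀ x y, |g x - g y| ≤ L * |x - y| := by
    intro x y
    have e : ∀ z, g z = (f z - ∑ ℓ : Fin (r + 1), c ℓ * z ^ (ℓ : ℕ)) ^ 2 := by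
      intro z; simp only [hg]; ring
    rw [e, e]; exact hL x y
  set s : Fin n → ℝ := fun i => Real.sqrt (∑ l, (U i l - Ubar (P i) l) ^ 2) with hs
  set t : Fin n → ℝ := fun j => Real.sqrt (∑ l, (V j l) ^ 2) with ht
  -- rewrite coreset sum as a sum over rows of U
  have hrw : (∑ i : Fin k, ∑ j : Fin n,
        ((Finset.univ.filter (fun t => P t = i)).card : ℝ) * g ((Ubar * Vᵀ) i j))
      = ∑ i : Fin n, ∑ j : Fin n, g ((Ubar * Vᵀ) (P i) j) := by
    rw [← Finset.sum_fiberwise Finset.univ P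
      (fun i => ∑ j : Fin n, g ((Ubar * Vᵀ) (P i) j))]
    refine Finset.sum_congr rfl fun i _ => ?_
    have h1 : ∀ x ∈ Finset.univ.filter (fun t => P t = i),
        (∑ j : Fin n, g ((Ubar * Vᵀ) (P x) j)) = ∑ j : Fin n, g ((Ubar * Vᵀ) i j) := by
      intro x hx
      rw [(Finset.mem_filter.mp hx).2]
    rw [Finset.sum_congr rfl h1, Finset.sum_const, nsmul_eq_mul, Finset.mul_sum]
  -- per-entry Cauchy–Schwarz bound
  have hCS : ∀ (i j : Fin n), |(U * Vᵀ) i j - (Ubar * Vᵀ) (P i) j| ≤ s i * t j := by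
    intro i j
    have hx : (U * Vᵀ) i j - (Ubar * Vᵀ) (P i) j
        = ∑ l, (U i l - Ubar (P i) l) * V j l := by
      simp [Matrix.mul_apply, Matrix.transpose_apply, ← Finset.sum_sub_distrib, sub_mul]
    rw [hx]
    have h2 : (∑ l, (U i l - Ubar (P i) l) * V j l) ^ 2
        ≤ (∑ l, (U i l - Ubar (P i) l) ^ 2) * ∑ l, (V j l) ^ 2 :=
      Finset.sum_mul_sq_le_sq_mul_sq Finset.univ _ _
    have h3 := Real.sqrt_le_sqrt h2
    rw [Real.sqrt_sq_eq_abs,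
      Real.sqrt_mul (Finset.sum_nonneg fun _ _ => sq_nonneg _)] at h3
    exact h3
  -- main estimate
  have hmain : |(∑ i : Fin n, ∑ j : Fin n, g ((U * Vᵀ) i j))
      - ∑ i : Fin n, ∑ j : Fin n, g ((Ubar * Vᵀ) (P i) j)|
      ≤ L * ε * ∑ j, t j := by
    have h4 : |(∑ i : Fin n, ∑ j : Fin n, g ((U * Vᵀ) i j))
        - ∑ i : Fin n, ∑ j : Fin n, g ((Ubar * Vᵀ) (P i) j)|
        ≤ ∑ i : Fin n, ∑ j : Fin n,
          |g ((U * Vᵀ) i j) - g ((Ubar * Vᵀ) (P i) j)| := by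
      rw [← Finset.sum_sub_distrib]
      refine (Finset.abs_sum_le_sum_abs _ _).trans ?_
      refine Finset.sum_le_sum fun i _ => ?_
      rw [← Finset.sum_sub_distrib]
      exact Finset.abs_sum_le_sum_abs _ _
    refine h4.trans ?_
    have h5 : ∑ i : Fin n, ∑ j : Fin n,
        |g ((U * Vᵀ) i j) - g ((Ubar * Vᵀ) (P i) j)|
        ≤ ∑ i : Fin n, ∑ j : Fin n, L * (s i * t j) := by
      refine Finset.sum_le_sum fun i _ => Finset.sum_le_sum fun j _ => ?_
      refine (hL' _ _).trans ?_
      exact mul_le_mul_of_nonneg_left (hCS i j) hLnn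
    refine h5.trans ?_
    have h6 : ∑ i : Fin n, ∑ j : Fin n, L * (s i * t j)
        = L * ((∑ i, s i) * ∑ j, t j) := by
      have h7 : ∀ i : Fin n, ∑ j : Fin n, L * (s i * t j)
          = L * s i * ∑ j, t j := by
        intro i
        rw [Finset.mul_sum]
        exact Finset.sum_congr rfl fun j _ => by ring
      rw [Finset.sum_congr rfl fun i _ => h7 i, ← Finset.sum_mul, ← Finset.mul_sum,
        mul_assoc]
    rw [h6, mul_assoc]
    refine mul_le_mul_of_nonneg_left ?_ hLnn
    exact mul_le_mul_of_nonneg_right hcore htnn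
  calc |(∑ i : Fin n, ∑ j : Fin n, g ((U * Vᵀ) i j))
      - (∑ i : Fin k, ∑ j : Fin n,
        ((Finset.univ.filter (fun t => P t = i)).card : ℝ) * g ((Ubar * Vᵀ) i j))|
      = |(∑ i : Fin n, ∑ j : Fin n, g ((U * Vᵀ) i j))
        - ∑ i : Fin n, ∑ j : Fin n, g ((Ubar * Vᵀ) (P i) j)| := by rw [hrw]
    _ ≤ L * ε * ∑ j, t j := hmain
end
end
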